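/- Let p ≥ 2 and c ≥ 2 be such that N = c·p ∈ ℕ, let a > 0, and set k = ⌈(c·a/2)·p·ln p⌉. In the random-allocation model with m ≥ 1 elements assigned independently and uniformly at random to N queues and a fixed two-element set S of queues, the probability that the rank of the deleted element (the smallest index i ≤ m with X_i ∈ S, taken as m+1, or as the full remaining size, if no such index exists) exceeds k is at most p^{-a}. Hence the rank error is in O(p log p) with probability at least 1 - p^{-a}. -/
import Mathlib


/-- The (one-based) rank of the element deleted by a MultiQueue `deleteMin` in the
random-allocation model: elements of ranks `1, …, m` (zero-based indices `Fin m`) are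
allocated to queues by `f : Fin m → Fin N`, and the deleted element is the one of
smallest rank allocated to a queue in the inspected set `S`; if no element lies in a
queue of `S`, the rank is taken to be `m + 1`. -/
noncomputable def deletedRank {m N : ℕ} (S : Finset (Fin N)) (f : Fin m → Fin N) : ℕ :=
  sInf ({i : ℕ | ∃ h : i < m, f ⟨i, h⟩ ∈ S} ∪ {m}) + 1

/-- Let `p ≥ 2`, `c ≥ 2` with `N = c·p ∈ ℕ`, let `a > 0`, and set
`k = ⌈(c·a/2)·p·ln p⌉`.  In the random-allocation model with `m ≥ 1` elements assigned
independently and uniformly at random to the `N` queues and a fixed two-element set `S`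
of inspected queues, the probability that the rank of the deleted element exceeds `k`
is at most `p^{-a}`; hence the rank error is `O(p log p)` with probability at least
`1 - p^{-a}`. -/
theorem multiqueue_rank_whp (p N m : ℕ) (c a : ℝ) (hp : 2 ≤ p) (hc : 2 ≤ c)
    (hN : (N : ℝ) = c * p) (ha : 0 < a) (hm : 1 ≤ m)
    (S : Finset (Fin N)) (hS : S.card = 2) (k : ℕ)
    (hk : k = ⌈(c * a / 2) * p * Real.log p⌉₊) :
    ((@Finset.filter _ (fun f : Fin m → Fin N => k < deletedRank S f)
          (Classical.decPred _) Finset.univ).card : ℝ) / (N : ℝ) ^ m ≤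
      (p : ℝ) ^ (-a) := by
  classical
  have hp1 : (1:ℝ) ≤ (p:ℝ) := by exact_mod_cast Nat.one_le_of_lt hp
  have hp2 : (2:ℝ) ≤ (p:ℝ) := by exact_mod_cast hp
  have hN4 : (4:ℝ) ≤ (N:ℝ) := by rw [hN]; nlinarith
  have hNpos : 0 < N := by exact_mod_cast lt_of_lt_of_le (by norm_num : (0:ℝ) < 4) hN4
  have hN2 : 2 ≤ N := by exact_mod_cast le_trans (by norm_num : (2:ℝ) ≤ 4) hN4
  have hrpos : (0:ℝ) < (p : ℝ) ^ (-a) := Real.rpow_pos_of_pos (by linarith) _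
  rcases le_or_gt k m with hkm | hkm
  · -- main case: k ≤ m
    -- characterize the filtered set
    have hiff : ∀ f : Fin m → Fin N,
        (k < deletedRank S f ↔ ∀ i : Fin m, (i : ℕ) < k → f i ∉ S) := by
      intro f
      unfold deletedRank
      set T := ({i : ℕ | ∃ h : i < m, f ⟨i, h⟩ ∈ S} ∪ {m}) with hT
      have hmemT : m ∈ T := by simp [hT]
      constructor
      · intro h i hik hiS
        have hiT : (i : ℕ) ∈ T := Or.inl ⟨i.isLt, by simpa using hiS⟩
        have := Nat.sInf_le hiT
        omega
      · intro h
        have hle : k ≤ sInf T := by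
          by_contra hcon
          push_neg at hcon
          have hmemInf : sInf T ∈ T := Nat.sInf_mem ⟨m, hmemT⟩
          rcases hmemInf with ⟨hlt, hmem⟩ | heq
          · exact h ⟨sInf T, hlt⟩ hcon hmem
          · simp only [Set.mem_singleton_iff] at heq
            omega
        omega
    have hfilter : (@Finset.filter _ (fun f : Fin m → Fin N => k < deletedRank S f)
          (Classical.decPred _) Finset.univ) =
        Fintype.piFinset (fun i : Fin m => if (i : ℕ) < k then Sᶜ else Finset.univ) := by
      ext f
      simp only [Finset.mem_filter, Finset.mem_univ, true_and, Fintype.mem_piFinset]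
      rw [hiff f]
      constructor
      · intro h i
        by_cases hi : (i : ℕ) < k
        · simp [hi, h i hi]
        · simp [hi]
      · intro h i hi
        have := h i
        simp [hi] at this
        exact this
    have hcard : (@Finset.filter _ (fun f : Fin m → Fin N => k < deletedRank S f)
          (Classical.decPred _) Finset.univ).card = (N - 2) ^ k * N ^ (m - k) := by
      rw [hfilter, Fintype.card_piFinset]
      have hval : ∀ i : Fin m, (if (i : ℕ) < k then Sᶜ else (Finset.univ : Finset (Fin N))).card
          = if (i : ℕ) < k then N - 2 else N := by
        intro i
        by_cases hi : (i : ℕ) < k <;>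
          simp [hi, Finset.card_compl, hS, Finset.card_univ]
      simp only [hval]
      rw [Finset.prod_ite, Finset.prod_const, Finset.prod_const]
      have hcard1 : (Finset.filter (fun i : Fin m => (i : ℕ) < k) Finset.univ).card = k := by
        have : Finset.filter (fun i : Fin m => (i : ℕ) < k) Finset.univ =
            Finset.map (Fin.castLEEmb hkm) Finset.univ := by
          ext i
          simp only [Finset.mem_filter, Finset.mem_univ, true_and, Finset.mem_map,
            Fin.castLEEmb_apply]
          constructor
          · intro h
            exact ⟨⟨(i : ℕ), h⟩, by simp [Fin.ext_iff]⟩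
          · rintro ⟨j, rfl⟩
            simpa using j.isLt
        rw [this, Finset.card_map, Finset.card_univ, Fintype.card_fin]
      have hcard2 : (Finset.filter (fun i : Fin m => ¬ (i : ℕ) < k) Finset.univ).card = m - k := by
        have := Finset.card_filter_add_card_filter_not
          (s := (Finset.univ : Finset (Fin m))) (p := fun i : Fin m => (i : ℕ) < k)
        rw [Finset.card_univ, Fintype.card_fin, hcard1] at this
        omega
      rw [hcard1, hcard2]
    rw [hcard]
    push_cast [Nat.cast_sub hN2]
    have hNR : (0:ℝ) < (N:ℝ) := by linarith
    have heq : ((N:ℝ) - 2) ^ k * (N:ℝ) ^ (m - k) / (N:ℝ) ^ m = (1 - 2 / N) ^ k := by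
      have hm' : (N:ℝ) ^ m = (N:ℝ) ^ k * (N:ℝ) ^ (m - k) := by
        rw [← pow_add]; congr 1; omega
      rw [hm', one_sub_div hNR.ne', div_pow,
        mul_div_mul_right _ _ (pow_ne_zero _ hNR.ne')]
    rw [heq]
    -- now bound (1 - 2/N)^k ≤ exp(-2/N)^k = exp(-2k/N) ≤ p^(-a)
    have h1 : (1 - 2 / (N:ℝ)) ^ k ≤ Real.exp (-(2 / N)) ^ k := by
      apply pow_le_pow_left₀
      · have : (2:ℝ) / N ≤ 2 / 4 := by
          apply div_le_div_of_nonneg_left (by norm_num) (by norm_num) hN4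
        linarith
      · have := Real.add_one_le_exp (-(2 / (N:ℝ)))
        linarith
    have h2 : Real.exp (-(2 / (N:ℝ))) ^ k = Real.exp ((k:ℝ) * (-(2 / N))) := by
      rw [← Real.exp_nat_mul]
    have hlogp : 0 ≤ Real.log p := Real.log_nonneg hp1
    have hkge : (c * a / 2) * p * Real.log p ≤ (k : ℝ) := by
      rw [hk]; exact Nat.le_ceil _
    have h3 : (k:ℝ) * (-(2 / N)) ≤ -(a * Real.log p) := by
      have key : a * Real.log p * N ≤ 2 * k := by rw [hN]; nlinarith
      have hdiv : a * Real.log p ≤ 2 * k / N := (le_div_iff₀ hNR).mpr key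
      have heq2 : (k:ℝ) * (-(2 / N)) = -(2 * k / N) := by ring
      rw [heq2]
      linarith
    have h4 : Real.exp (-(a * Real.log p)) = (p:ℝ) ^ (-a) := by
      rw [Real.rpow_def_of_pos (by linarith), mul_comm, ← neg_mul]
      ring_nf
    calc (1 - 2 / (N:ℝ)) ^ k ≤ Real.exp (-(2 / N)) ^ k := h1
      _ = Real.exp ((k:ℝ) * (-(2 / N))) := h2
      _ ≤ Real.exp (-(a * Real.log p)) := Real.exp_le_exp.mpr h3
      _ = (p:ℝ) ^ (-a) := h4
  · -- if k > m the filtered set is empty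
    have hempty : (@Finset.filter _ (fun f : Fin m → Fin N => k < deletedRank S f)
          (Classical.decPred _) Finset.univ) = ∅ := by
      apply Finset.eq_empty_iff_forall_notMem.mpr
      intro f hf
      replace hf : k < deletedRank S f := ((@Finset.mem_filter _ _ (Classical.decPred _) _ _).mp hf).2
      unfold deletedRank at hf
      have : sInf ({i : ℕ | ∃ h : i < m, f ⟨i, h⟩ ∈ S} ∪ {m}) ≤ m :=
        Nat.sInf_le (by simp)
      omega
    rw [hempty]
    simp only [Finset.card_empty, Nat.cast_zero, zero_div]
    exact hrpos.le
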